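/- arXiv:2402.07628 — 4 statements merged into one kernel-verified Lean document; each statement's English description precedes it below -/
import Mathlib

section
/- Fix reals a < b and positive constants c, α, β. Let h : ℝ × ℝ → ℝ be smooth (C^∞ in (t,x)) and satisfy the Dzektser seepage equation ∂ₜh − c² ∂ₓ²∂ₜh = α ∂ₓ²h − β ∂ₓ⁴h for all t ∈ ℝ and x ∈ [a,b]. Assume the homogeneous boundary conditions h(t,a) = h(t,b) = 0 and ∂ₓh(t,a) = ∂ₓh(t,b) = 0 for all t. Define the Hamiltonian H(t) := (1/2)∫ₐᵇ ( h(t,x)² + c² (∂ₓh(t,x))² ) dx. Then for all t, H'(t) = −∫ₐᵇ ( α (∂ₓh(t,x))² + β (∂ₓ²h(t,x))² ) dx, and in particular H'(t) ≤ 0. -/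
open Function MeasureTheory Set intervalIntegral

/-- Time partial derivative of a function `ℝ × ℝ → ℝ` (first variable). -/
noncomputable def dt (h : ℝ → ℝ → ℝ) : ℝ → ℝ → ℝ := fun t x => deriv (fun s => h s x) t

/-- Space partial derivative of a function `ℝ × ℝ → ℝ` (second variable). -/
noncomputable def dx (h : ℝ → ℝ → ℝ) : ℝ → ℝ → ℝ := fun t x => deriv (fun y => h t y) x

section Aux

variable {h : ℝ → ℝ → ℝ}

lemma hasDerivAt_dx_aux (hsm : ContDiff ℝ (⊤ : ℕ∞) (uncurry h)) (t x : ℝ) :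
    HasDerivAt (fun y => h t y) (fderiv ℝ (uncurry h) (t, x) (0, 1)) x := by
  have h1 : HasDerivAt (fun y : ℝ => ((t, y) : ℝ × ℝ)) ((0 : ℝ), (1 : ℝ)) x :=
    (hasDerivAt_const x t).prodMk (hasDerivAt_id x)
  exact ((hsm.differentiable (by simp) (t, x)).hasFDerivAt).comp_hasDerivAt x h1

lemma hasDerivAt_dt_aux (hsm : ContDiff ℝ (⊤ : ℕ∞) (uncurry h)) (t x : ℝ) :
    HasDerivAt (fun s => h s x) (fderiv ℝ (uncurry h) (t, x) (1, 0)) t := by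
  have h1 : HasDerivAt (fun s : ℝ => ((s, x) : ℝ × ℝ)) ((1 : ℝ), (0 : ℝ)) t :=
    (hasDerivAt_id t).prodMk (hasDerivAt_const t x)
  exact ((hsm.differentiable (by simp) (t, x)).hasFDerivAt).comp_hasDerivAt t h1

lemma dx_eq (hsm : ContDiff ℝ (⊤ : ℕ∞) (uncurry h)) (t x : ℝ) :
    dx h t x = fderiv ℝ (uncurry h) (t, x) (0, 1) :=
  (hasDerivAt_dx_aux hsm t x).deriv

lemma dt_eq (hsm : ContDiff ℝ (⊤ : ℕ∞) (uncurry h)) (t x : ℝ) :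
    dt h t x = fderiv ℝ (uncurry h) (t, x) (1, 0) :=
  (hasDerivAt_dt_aux hsm t x).deriv

lemma hasDerivAt_dx (hsm : ContDiff ℝ (⊤ : ℕ∞) (uncurry h)) (t x : ℝ) :
    HasDerivAt (fun y => h t y) (dx h t x) x :=
  (dx_eq hsm t x) ▸ hasDerivAt_dx_aux hsm t x

lemma hasDerivAt_dt (hsm : ContDiff ℝ (⊤ : ℕ∞) (uncurry h)) (t x : ℝ) :
    HasDerivAt (fun s => h s x) (dt h t x) t :=
  (dt_eq hsm t x) ▸ hasDerivAt_dt_aux hsm t x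

lemma uncurry_dx_eq (hsm : ContDiff ℝ (⊤ : ℕ∞) (uncurry h)) :
    uncurry (dx h) = fun p : ℝ × ℝ => fderiv ℝ (uncurry h) p (0, 1) := by
  funext p
  obtain ⟨t, x⟩ := p
  exact dx_eq hsm t x

lemma uncurry_dt_eq (hsm : ContDiff ℝ (⊤ : ℕ∞) (uncurry h)) :
    uncurry (dt h) = fun p : ℝ × ℝ => fderiv ℝ (uncurry h) p (1, 0) := by
  funext p
  obtain ⟨t, x⟩ := p
  exact dt_eq hsm t x

lemma contDiff_dx (hsm : ContDiff ℝ (⊤ : ℕ∞) (uncurry h)) : ContDiff ℝ (⊤ : ℕ∞) (uncurry (dx h)) := by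
  rw [uncurry_dx_eq hsm]
  exact (hsm.fderiv_right (by simp)).clm_apply contDiff_const

lemma contDiff_dt (hsm : ContDiff ℝ (⊤ : ℕ∞) (uncurry h)) : ContDiff ℝ (⊤ : ℕ∞) (uncurry (dt h)) := by
  rw [uncurry_dt_eq hsm]
  exact (hsm.fderiv_right (by simp)).clm_apply contDiff_const

lemma fderiv2_apply (f : ℝ × ℝ → ℝ) (hf : ContDiff ℝ (⊤ : ℕ∞) f) (p : ℝ × ℝ) (v w : ℝ × ℝ) :
    fderiv ℝ (fun q => fderiv ℝ f q v) p w = fderiv ℝ (fderiv ℝ f) p w v := by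
  have hdf : DifferentiableAt ℝ (fderiv ℝ f) p :=
    ((hf.fderiv_right (m := (⊤ : ℕ∞)) (by simp)).differentiable (by simp)) p
  have hc : HasFDerivAt (fun q => fderiv ℝ f q v)
      ((ContinuousLinearMap.apply ℝ ℝ v).comp (fderiv ℝ (fderiv ℝ f) p)) p :=
    (ContinuousLinearMap.apply ℝ ℝ v).hasFDerivAt.comp p hdf.hasFDerivAt
  rw [hc.fderiv]
  rfl

lemma pd_swap (hsm : ContDiff ℝ (⊤ : ℕ∞) (uncurry h)) (t x : ℝ) :
    dt (dx h) t x = dx (dt h) t x := by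
  have e1 : dt (dx h) t x = fderiv ℝ (uncurry (dx h)) (t, x) (1, 0) :=
    dt_eq (contDiff_dx hsm) t x
  have e2 : dx (dt h) t x = fderiv ℝ (uncurry (dt h)) (t, x) (0, 1) :=
    dx_eq (contDiff_dt hsm) t x
  rw [e1, e2, uncurry_dx_eq hsm, uncurry_dt_eq hsm,
    fderiv2_apply _ hsm, fderiv2_apply _ hsm]
  exact second_derivative_symmetric
    (fun y => ((hsm.differentiable (by simp)) y).hasFDerivAt)
    (((hsm.fderiv_right (m := (⊤ : ℕ∞)) (by simp)).differentiable (by simp) (t, x)).hasFDerivAt) _ _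

lemma cont_slice (hsm : ContDiff ℝ (⊤ : ℕ∞) (uncurry h)) (t : ℝ) :
    Continuous fun x => h t x :=
  hsm.continuous.comp (continuous_const.prodMk continuous_id)

lemma ibp_zero (a b : ℝ) (u v u' v' : ℝ → ℝ)
    (hu : ∀ x ∈ Set.uIcc a b, HasDerivAt u (u' x) x)
    (hv : ∀ x ∈ Set.uIcc a b, HasDerivAt v (v' x) x)
    (hu' : Continuous u') (hv' : Continuous v')
    (hz : u b * v b - u a * v a = 0) :
    ∫ x in a..b, u x * v' x = -∫ x in a..b, u' x * v x := by
  rw [intervalIntegral.integral_mul_deriv_eq_deriv_mul hu hv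
    (hu'.intervalIntegrable a b) (hv'.intervalIntegrable a b)]
  linarith

end Aux

/-- Dissipativity of the Dzektser seepage equation with homogeneous boundary conditions:
the Hamiltonian `H(t) = ½∫ₐᵇ (h² + c²(∂ₓh)²)` satisfies
`H'(t) = −∫ₐᵇ (α(∂ₓh)² + β(∂ₓ²h)²) ≤ 0`. -/
theorem stmt4 (a b : ℝ) (hab : a < b) (c α β : ℝ) (hc : 0 < c) (hα : 0 < α) (hβ : 0 < β)
    (h : ℝ → ℝ → ℝ) (hsm : ContDiff ℝ (⊤ : ℕ∞) (Function.uncurry h))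
    (heq : ∀ t : ℝ, ∀ x ∈ Set.Icc a b,
      dt h t x - c ^ 2 * dx (dx (dt h)) t x
        = α * dx (dx h) t x - β * dx (dx (dx (dx h))) t x)
    (hbc : ∀ t : ℝ, h t a = 0 ∧ h t b = 0 ∧ dx h t a = 0 ∧ dx h t b = 0) :
    ∀ t : ℝ,
      HasDerivAt
        (fun s => (1 / 2 : ℝ) * ∫ x in a..b, ((h s x) ^ 2 + c ^ 2 * (dx h s x) ^ 2))
        (-∫ x in a..b, (α * (dx h t x) ^ 2 + β * (dx (dx h) t x) ^ 2)) t ∧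
      (-∫ x in a..b, (α * (dx h t x) ^ 2 + β * (dx (dx h) t x) ^ 2)) ≤ 0 := by
  -- smoothness of iterated partial derivatives
  have s1 := contDiff_dx hsm
  have s2 := contDiff_dx s1
  have s3 := contDiff_dx s2
  have s4 := contDiff_dx s3
  have st := contDiff_dt hsm
  have st1 := contDiff_dx st
  have st2 := contDiff_dx st1
  intro t
  -- nonpositivity part
  have hnonpos : (-∫ x in a..b, (α * (dx h t x) ^ 2 + β * (dx (dx h) t x) ^ 2)) ≤ 0 := by
    have : (0:ℝ) ≤ ∫ x in a..b, (α * (dx h t x) ^ 2 + β * (dx (dx h) t x) ^ 2) := by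
      apply intervalIntegral.integral_nonneg hab.le
      intro x _
      positivity
    linarith
  -- differentiation under the integral sign
  have hF_deriv : ∀ (s x : ℝ), HasDerivAt (fun s' => (h s' x) ^ 2 + c ^ 2 * (dx h s' x) ^ 2)
      (2 * h s x * dt h s x + c ^ 2 * (2 * dx h s x * dx (dt h) s x)) s := by
    intro s x
    have h1 := (hasDerivAt_dt hsm s x).pow 2
    have h2 := HasDerivAt.const_mul (c ^ 2) ((hasDerivAt_dt s1 s x).pow 2)
    have h3 := h1.add h2
    refine h3.congr_deriv ?_
    rw [← pd_swap hsm s x]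
    push_cast
    ring
  -- joint continuity of the s-derivative
  have cF' : Continuous (fun p : ℝ × ℝ =>
      2 * h p.1 p.2 * dt h p.1 p.2 + c ^ 2 * (2 * dx h p.1 p.2 * dx (dt h) p.1 p.2)) := by
    have c0 : Continuous (fun p : ℝ × ℝ => h p.1 p.2) := hsm.continuous
    have c1 : Continuous (fun p : ℝ × ℝ => dt h p.1 p.2) := st.continuous
    have c2 : Continuous (fun p : ℝ × ℝ => dx h p.1 p.2) := s1.continuous
    have c3 : Continuous (fun p : ℝ × ℝ => dx (dt h) p.1 p.2) := st1.continuous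
    exact ((continuous_const.mul c0).mul c1).add
      (continuous_const.mul ((continuous_const.mul c2).mul c3))
  obtain ⟨C, hC⟩ := (IsCompact.exists_bound_of_continuousOn
    ((isCompact_Icc (a := t - 1) (b := t + 1)).prod (isCompact_uIcc (a := a) (b := b)))
    cF'.continuousOn)
  have hFs_cont : ∀ s : ℝ, Continuous fun x => (h s x) ^ 2 + c ^ 2 * (dx h s x) ^ 2 := by
    intro s
    exact ((cont_slice hsm s).pow 2).add (continuous_const.mul ((cont_slice s1 s).pow 2))
  have hF't_cont : Continuous fun x =>
      2 * h t x * dt h t x + c ^ 2 * (2 * dx h t x * dx (dt h) t x) := by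
    exact ((continuous_const.mul (cont_slice hsm t)).mul (cont_slice st t)).add
      (continuous_const.mul ((continuous_const.mul (cont_slice s1 t)).mul (cont_slice st1 t)))
  have main := intervalIntegral.hasDerivAt_integral_of_dominated_loc_of_deriv_le
    (μ := volume) (a := a) (b := b)
    (F := fun s x => (h s x) ^ 2 + c ^ 2 * (dx h s x) ^ 2)
    (F' := fun s x => 2 * h s x * dt h s x + c ^ 2 * (2 * dx h s x * dx (dt h) s x))
    (x₀ := t) (bound := fun _ => C) (s := Metric.ball t 1) (Metric.ball_mem_nhds t one_pos)
    (Filter.Eventually.of_forall fun s => (hFs_cont s).aestronglyMeasurable)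
    ((hFs_cont t).intervalIntegrable a b)
    hF't_cont.aestronglyMeasurable
    (Filter.Eventually.of_forall fun x hx s hs => by
      have hs' : s ∈ Set.Icc (t - 1) (t + 1) := by
        rw [Metric.mem_ball, Real.dist_eq] at hs
        have h2 := abs_lt.mp hs
        exact ⟨by linarith [h2.1], by linarith [h2.2]⟩
      exact hC (s, x) ⟨hs', Set.uIoc_subset_uIcc hx⟩)
    intervalIntegrable_const
    (Filter.Eventually.of_forall fun x _ s _ => hF_deriv s x)
  -- integration-by-parts computations at time t
  have hb := hbc t
  have ibp1 : (∫ x in a..b, dx (dt h) t x * dx h t x)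
      = -∫ x in a..b, dx (dx (dt h)) t x * h t x := by
    apply ibp_zero a b _ _ _ _ (fun x _ => hasDerivAt_dx st1 t x)
      (fun x _ => hasDerivAt_dx hsm t x) (cont_slice st2 t) (cont_slice s1 t)
    rw [hb.1, hb.2.1]; ring
  have ibp2 : (∫ x in a..b, h t x * dx (dx h) t x)
      = -∫ x in a..b, dx h t x * dx h t x := by
    apply ibp_zero a b _ _ _ _ (fun x _ => hasDerivAt_dx hsm t x)
      (fun x _ => hasDerivAt_dx s1 t x) (cont_slice s1 t) (cont_slice s2 t)
    rw [hb.2.2.1, hb.2.2.2]; ring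
  have ibp3 : (∫ x in a..b, h t x * dx (dx (dx (dx h))) t x)
      = -∫ x in a..b, dx h t x * dx (dx (dx h)) t x := by
    apply ibp_zero a b _ _ _ _ (fun x _ => hasDerivAt_dx hsm t x)
      (fun x _ => hasDerivAt_dx s3 t x) (cont_slice s1 t) (cont_slice s4 t)
    rw [hb.1, hb.2.1]; ring
  have ibp4 : (∫ x in a..b, dx h t x * dx (dx (dx h)) t x)
      = -∫ x in a..b, dx (dx h) t x * dx (dx h) t x := by
    apply ibp_zero a b _ _ _ _ (fun x _ => hasDerivAt_dx s1 t x)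
      (fun x _ => hasDerivAt_dx s2 t x) (cont_slice s2 t) (cont_slice s3 t)
    rw [hb.2.2.1, hb.2.2.2]; ring
  -- linearity rewritings
  have lin1 : (∫ x in a..b, (2 * h t x * dt h t x + c ^ 2 * (2 * dx h t x * dx (dt h) t x)))
      = 2 * (∫ x in a..b, h t x * dt h t x)
        + (2 * c ^ 2) * ∫ x in a..b, dx (dt h) t x * dx h t x := by
    rw [show (fun x => 2 * h t x * dt h t x + c ^ 2 * (2 * dx h t x * dx (dt h) t x))
        = fun x => 2 * (h t x * dt h t x) + (2 * c ^ 2) * (dx (dt h) t x * dx h t x) from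
      funext fun x => by ring]
    rw [intervalIntegral.integral_add
        ((continuous_const.fun_mul ((cont_slice hsm t).fun_mul (cont_slice st t))).intervalIntegrable a b)
        ((continuous_const.fun_mul ((cont_slice st1 t).fun_mul (cont_slice s1 t))).intervalIntegrable a b),
      intervalIntegral.integral_const_mul, intervalIntegral.integral_const_mul]
  have lin2 : (∫ x in a..b, h t x * (dt h t x - c ^ 2 * dx (dx (dt h)) t x))
      = (∫ x in a..b, h t x * dt h t x)
        - c ^ 2 * ∫ x in a..b, dx (dx (dt h)) t x * h t x := by
    rw [show (fun x => h t x * (dt h t x - c ^ 2 * dx (dx (dt h)) t x))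
        = fun x => h t x * dt h t x - c ^ 2 * (dx (dx (dt h)) t x * h t x) from
      funext fun x => by ring]
    rw [intervalIntegral.integral_sub
        (((cont_slice hsm t).fun_mul (cont_slice st t)).intervalIntegrable a b)
        ((continuous_const.fun_mul ((cont_slice st2 t).fun_mul (cont_slice hsm t))).intervalIntegrable a b),
      intervalIntegral.integral_const_mul]
  have lin3 : (∫ x in a..b, h t x * (α * dx (dx h) t x - β * dx (dx (dx (dx h))) t x))
      = α * (∫ x in a..b, h t x * dx (dx h) t x)
        - β * ∫ x in a..b, h t x * dx (dx (dx (dx h))) t x := by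
    rw [show (fun x => h t x * (α * dx (dx h) t x - β * dx (dx (dx (dx h))) t x))
        = fun x => α * (h t x * dx (dx h) t x) - β * (h t x * dx (dx (dx (dx h))) t x) from
      funext fun x => by ring]
    rw [intervalIntegral.integral_sub
        ((continuous_const.fun_mul ((cont_slice hsm t).fun_mul (cont_slice s2 t))).intervalIntegrable a b)
        ((continuous_const.fun_mul ((cont_slice hsm t).fun_mul (cont_slice s4 t))).intervalIntegrable a b),
      intervalIntegral.integral_const_mul, intervalIntegral.integral_const_mul]
  have lin4 : (∫ x in a..b, (α * (dx h t x) ^ 2 + β * (dx (dx h) t x) ^ 2))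
      = α * (∫ x in a..b, dx h t x * dx h t x)
        + β * ∫ x in a..b, dx (dx h) t x * dx (dx h) t x := by
    rw [show (fun x => α * (dx h t x) ^ 2 + β * (dx (dx h) t x) ^ 2)
        = fun x => α * (dx h t x * dx h t x) + β * (dx (dx h) t x * dx (dx h) t x) from
      funext fun x => by ring]
    rw [intervalIntegral.integral_add
        ((continuous_const.fun_mul ((cont_slice s1 t).fun_mul (cont_slice s1 t))).intervalIntegrable a b)
        ((continuous_const.fun_mul ((cont_slice s2 t).fun_mul (cont_slice s2 t))).intervalIntegrable a b),
      intervalIntegral.integral_const_mul, intervalIntegral.integral_const_mul]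
  -- the PDE step
  have hmid : (∫ x in a..b, h t x * (dt h t x - c ^ 2 * dx (dx (dt h)) t x))
      = ∫ x in a..b, h t x * (α * dx (dx h) t x - β * dx (dx (dx (dx h))) t x) := by
    apply intervalIntegral.integral_congr
    intro x hx
    rw [Set.uIcc_of_le hab.le] at hx
    show h t x * (dt h t x - c ^ 2 * dx (dx (dt h)) t x)
      = h t x * (α * dx (dx h) t x - β * dx (dx (dx (dx h))) t x)
    rw [heq t x hx]
  -- assemble the value of the derivative
  have hval : (∫ x in a..b, (2 * h t x * dt h t x + c ^ 2 * (2 * dx h t x * dx (dt h) t x)))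
      = 2 * -(∫ x in a..b, (α * (dx h t x) ^ 2 + β * (dx (dx h) t x) ^ 2)) := by
    rw [lin1, ibp1, lin4]
    have := hmid
    rw [lin2, lin3, ibp2, ibp3, ibp4] at this
    linarith
  constructor
  · have H := HasDerivAt.const_mul ((1:ℝ)/2) main.2
    rw [hval] at H
    refine H.congr_deriv ?_
    ring
  · exact hnonpos
end

section
/- Fix reals a < b and positive constants ρ, E, μ, k, d, τ. Let ξ₁, ξ₂, ξ₃, e_σ : ℝ × ℝ → ℝ be smooth and set v := ξ₃/ρ, σ := E ξ₂, F := k ξ₁. Assume the implicit nanorod dynamics: ∂ₜξ₁ = v; ∂ₜξ₂ − μ ∂ₓ²∂ₜξ₂ = ∂ₓv; ∂ₜξ₃ = −F + ∂ₓσ − d·v + ∂ₓe_σ; and the implicit resistive relation e_σ − μ ∂ₓ²e_σ = τ ∂ₓv, all on ℝ × [a,b]. Assume the homogeneous boundary conditions: for every t, v(t,a) = v(t,b) = 0, e_σ(t,a) = e_σ(t,b) = 0, ∂ₜξ₂(t,a) = ∂ₜξ₂(t,b) = 0, and ∂ₜ∂ₓξ₂(t,a) = ∂ₜ∂ₓξ₂(t,b)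 = 0. Define H(t) := (1/2)∫ₐᵇ ( k ξ₁² + E ξ₂² + μ E (∂ₓξ₂)² + ξ₃²/ρ ) dx. Then for all t, H'(t) = −∫ₐᵇ ( d·v² + (1/τ)( e_σ² + μ (∂ₓe_σ)² ) ) dx, and in particular H'(t) ≤ 0. -/
section toolkit
variable {f : ℝ → ℝ → ℝ}

lemma pd_hasDerivAt_dt (hf : ContDiff ℝ (⊤ : ℕ∞) (Function.uncurry f)) (t x : ℝ) :
    HasDerivAt (fun s => f s x) (dt f t x) t := by
  have h : DifferentiableAt ℝ (fun s => f s x) t :=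
    (hf.differentiable (by simp : ((⊤ : ℕ∞) : WithTop ℕ∞) ≠ 0) (t, x)).comp t (f := fun s => (s, x))
      ((differentiableAt_id).prodMk (differentiableAt_const x))
  exact h.hasDerivAt

lemma pd_hasDerivAt_dx (hf : ContDiff ℝ (⊤ : ℕ∞) (Function.uncurry f)) (t x : ℝ) :
    HasDerivAt (fun y => f t y) (dx f t x) x := by
  have h : DifferentiableAt ℝ (fun y => f t y) x :=
    (hf.differentiable (by simp : ((⊤ : ℕ∞) : WithTop ℕ∞) ≠ 0) (t, x)).comp x (f := fun y => (t, y))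
      ((differentiableAt_const t).prodMk differentiableAt_id)
  exact h.hasDerivAt

lemma pd_dt_eq (hf : ContDiff ℝ (⊤ : ℕ∞) (Function.uncurry f)) (t x : ℝ) :
    dt f t x = fderiv ℝ (Function.uncurry f) (t, x) (1, 0) := by
  have h : HasDerivAt (fun s => f s x)
      (fderiv ℝ (Function.uncurry f) (t, x) (1, 0)) t :=
    (hf.differentiable (by simp : ((⊤ : ℕ∞) : WithTop ℕ∞) ≠ 0) (t, x)).hasFDerivAt.comp_hasDerivAt t (f := fun s => (s, x))
      ((hasDerivAt_id t).prodMk (hasDerivAt_const t x))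
  exact h.deriv

lemma pd_dx_eq (hf : ContDiff ℝ (⊤ : ℕ∞) (Function.uncurry f)) (t x : ℝ) :
    dx f t x = fderiv ℝ (Function.uncurry f) (t, x) (0, 1) := by
  have h : HasDerivAt (fun y => f t y)
      (fderiv ℝ (Function.uncurry f) (t, x) (0, 1)) x :=
    (hf.differentiable (by simp : ((⊤ : ℕ∞) : WithTop ℕ∞) ≠ 0) (t, x)).hasFDerivAt.comp_hasDerivAt x (f := fun y => (t, y))
      ((hasDerivAt_const x t).prodMk (hasDerivAt_id x))
  exact h.deriv

lemma pd_contDiff_dt (hf : ContDiff ℝ (⊤ : ℕ∞) (Function.uncurry f)) :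
    ContDiff ℝ (⊤ : ℕ∞) (Function.uncurry (dt f)) := by
  have h : Function.uncurry (dt f)
      = fun p : ℝ × ℝ => fderiv ℝ (Function.uncurry f) p (1, 0) := by
    funext p; exact pd_dt_eq hf p.1 p.2
  rw [h]
  exact (hf.fderiv_right (by simp)).clm_apply contDiff_const

lemma pd_contDiff_dx (hf : ContDiff ℝ (⊤ : ℕ∞) (Function.uncurry f)) :
    ContDiff ℝ (⊤ : ℕ∞) (Function.uncurry (dx f)) := by
  have h : Function.uncurry (dx f)
      = fun p : ℝ × ℝ => fderiv ℝ (Function.uncurry f) p (0, 1) := by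
    funext p; exact pd_dx_eq hf p.1 p.2
  rw [h]
  exact (hf.fderiv_right (by simp)).clm_apply contDiff_const

lemma pd_schwarz (hf : ContDiff ℝ (⊤ : ℕ∞) (Function.uncurry f)) (t x : ℝ) :
    dt (dx f) t x = dx (dt f) t x := by
  set F := Function.uncurry f with hF
  set f' := fderiv ℝ F with hf'
  have hdf : ∀ y, HasFDerivAt F (f' y) y := fun y =>
    (hf.differentiable (by simp : ((⊤ : ℕ∞) : WithTop ℕ∞) ≠ 0) y).hasFDerivAt
  have hf'd : DifferentiableAt ℝ f' (t, x) :=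
    ((hf.fderiv_right (m := (⊤ : ℕ∞)) (by simp)).differentiable (by simp : ((⊤ : ℕ∞) : WithTop ℕ∞) ≠ 0)) (t, x)
  set f'' := fderiv ℝ f' (t, x) with hf''
  have hsnd : HasFDerivAt f' f'' (t, x) := hf'd.hasFDerivAt
  have sym := second_derivative_symmetric hdf hsnd
  have h1 : HasDerivAt (fun s => f' (s, x)) (f'' ((1 : ℝ), (0 : ℝ))) t :=
    hsnd.comp_hasDerivAt t ((hasDerivAt_id t).prodMk (hasDerivAt_const t x))
  have h1' : HasDerivAt (fun s => f' (s, x) ((0 : ℝ), (1 : ℝ)))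
      (f'' ((1 : ℝ), (0 : ℝ)) ((0 : ℝ), (1 : ℝ))) t := by
    simpa using h1.clm_apply (hasDerivAt_const t ((0 : ℝ), (1 : ℝ)))
  have e1 : dt (dx f) t x = f'' ((1 : ℝ), (0 : ℝ)) ((0 : ℝ), (1 : ℝ)) := by
    have hfun : (fun s => dx f s x) = fun s => f' (s, x) ((0 : ℝ), (1 : ℝ)) := by
      funext s; exact pd_dx_eq hf s x
    show deriv (fun s => dx f s x) t = _
    rw [hfun]; exact h1'.deriv
  have h2 : HasDerivAt (fun y => f' (t, y)) (f'' ((0 : ℝ), (1 : ℝ))) x :=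
    hsnd.comp_hasDerivAt x ((hasDerivAt_const x t).prodMk (hasDerivAt_id x))
  have h2' : HasDerivAt (fun y => f' (t, y) ((1 : ℝ), (0 : ℝ)))
      (f'' ((0 : ℝ), (1 : ℝ)) ((1 : ℝ), (0 : ℝ))) x := by
    simpa using h2.clm_apply (hasDerivAt_const x ((1 : ℝ), (0 : ℝ)))
  have e2 : dx (dt f) t x = f'' ((0 : ℝ), (1 : ℝ)) ((1 : ℝ), (0 : ℝ)) := by
    have hfun : (fun y => dt f t y) = fun y => f' (t, y) ((1 : ℝ), (0 : ℝ)) := by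
      funext y; exact pd_dt_eq hf t y
    show deriv (fun y => dt f t y) x = _
    rw [hfun]; exact h2'.deriv
  rw [e1, e2, sym]

lemma pd_cont_x (hf : ContDiff ℝ (⊤ : ℕ∞) (Function.uncurry f)) (t : ℝ) :
    Continuous (fun y => f t y) :=
  hf.continuous.comp (continuous_const.prodMk continuous_id)

end toolkit

/-- Dissipativity of the implicit nanorod model with local and non-local viscous damping
under homogeneous boundary conditions: the Hamiltonian
`H(t) = ½∫ₐᵇ (kξ₁² + Eξ₂² + μE(∂ₓξ₂)² + ξ₃²/ρ)` satisfies
`H'(t) = −∫ₐᵇ (d v² + (1/τ)(e_σ² + μ(∂ₓe_σ)²)) ≤ 0`. -/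
theorem stmt8 (a b : ℝ) (hab : a < b) (ρ E μ k d τ : ℝ)
    (hρ : 0 < ρ) (hE : 0 < E) (hμ : 0 < μ) (hk : 0 < k) (hd : 0 < d) (hτ : 0 < τ)
    (ξ₁ ξ₂ ξ₃ eσ : ℝ → ℝ → ℝ)
    (hξ₁ : ContDiff ℝ (⊤ : ℕ∞) (Function.uncurry ξ₁)) (hξ₂ : ContDiff ℝ (⊤ : ℕ∞) (Function.uncurry ξ₂))
    (hξ₃ : ContDiff ℝ (⊤ : ℕ∞) (Function.uncurry ξ₃)) (heσ : ContDiff ℝ (⊤ : ℕ∞) (Function.uncurry eσ))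
    (v σ F : ℝ → ℝ → ℝ)
    (hv : v = fun t x => ξ₃ t x / ρ)
    (hσ : σ = fun t x => E * ξ₂ t x)
    (hF : F = fun t x => k * ξ₁ t x)
    (hdyn₁ : ∀ t : ℝ, ∀ x ∈ Set.Icc a b, dt ξ₁ t x = v t x)
    (hdyn₂ : ∀ t : ℝ, ∀ x ∈ Set.Icc a b,
      dt ξ₂ t x - μ * dx (dx (dt ξ₂)) t x = dx v t x)
    (hdyn₃ : ∀ t : ℝ, ∀ x ∈ Set.Icc a b,
      dt ξ₃ t x = -F t x + dx σ t x - d * v t x + dx eσ t x)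
    (hres : ∀ t : ℝ, ∀ x ∈ Set.Icc a b,
      eσ t x - μ * dx (dx eσ) t x = τ * dx v t x)
    (hbc : ∀ t : ℝ,
      v t a = 0 ∧ v t b = 0 ∧ eσ t a = 0 ∧ eσ t b = 0 ∧
      dt ξ₂ t a = 0 ∧ dt ξ₂ t b = 0 ∧ dt (dx ξ₂) t a = 0 ∧ dt (dx ξ₂) t b = 0) :
    ∀ t : ℝ,
      HasDerivAt
        (fun s => (1 / 2 : ℝ) * ∫ x in a..b,
          (k * (ξ₁ s x) ^ 2 + E * (ξ₂ s x) ^ 2 + μ * E * (dx ξ₂ s x) ^ 2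
            + (ξ₃ s x) ^ 2 / ρ))
        (-∫ x in a..b,
          (d * (v t x) ^ 2 + (1 / τ) * ((eσ t x) ^ 2 + μ * (dx eσ t x) ^ 2))) t ∧
      (-∫ x in a..b,
          (d * (v t x) ^ 2 + (1 / τ) * ((eσ t x) ^ 2 + μ * (dx eσ t x) ^ 2))) ≤ 0 := by
  intro t
  -- smoothness bookkeeping
  have hvC : ContDiff ℝ (⊤ : ℕ∞) (Function.uncurry v) := by
    rw [hv]; exact hξ₃.div_const ρ
  have hdxξ₂ : ContDiff ℝ (⊤ : ℕ∞) (Function.uncurry (dx ξ₂)) := pd_contDiff_dx hξ₂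
  have hdtξ₂ : ContDiff ℝ (⊤ : ℕ∞) (Function.uncurry (dt ξ₂)) := pd_contDiff_dt hξ₂
  have hdxdtξ₂ : ContDiff ℝ (⊤ : ℕ∞) (Function.uncurry (dx (dt ξ₂))) := pd_contDiff_dx hdtξ₂
  have hdxdxdtξ₂ : ContDiff ℝ (⊤ : ℕ∞) (Function.uncurry (dx (dx (dt ξ₂)))) := pd_contDiff_dx hdxdtξ₂
  have hdxe : ContDiff ℝ (⊤ : ℕ∞) (Function.uncurry (dx eσ)) := pd_contDiff_dx heσ
  have hdxdxe : ContDiff ℝ (⊤ : ℕ∞) (Function.uncurry (dx (dx eσ))) := pd_contDiff_dx hdxe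
  have hdxv : ContDiff ℝ (⊤ : ℕ∞) (Function.uncurry (dx v)) := pd_contDiff_dx hvC
  have hdtdxξ₂ : ContDiff ℝ (⊤ : ℕ∞) (Function.uncurry (dt (dx ξ₂))) := pd_contDiff_dt hdxξ₂
  -- the t-derivative of the energy density
  set g : ℝ → ℝ → ℝ := fun s y =>
    k * (2 * ξ₁ s y * dt ξ₁ s y) + E * (2 * ξ₂ s y * dt ξ₂ s y)
      + μ * E * (2 * dx ξ₂ s y * dt (dx ξ₂) s y) + 2 * ξ₃ s y * dt ξ₃ s y / ρ with hg
  have hG : ∀ (s y : ℝ), HasDerivAt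
      (fun u => k * (ξ₁ u y) ^ 2 + E * (ξ₂ u y) ^ 2 + μ * E * (dx ξ₂ u y) ^ 2
        + (ξ₃ u y) ^ 2 / ρ) (g s y) s := by
    intro s y
    have h1 := pd_hasDerivAt_dt hξ₁ s y
    have h2 := pd_hasDerivAt_dt hξ₂ s y
    have h3 := pd_hasDerivAt_dt hdxξ₂ s y
    have h4 := pd_hasDerivAt_dt hξ₃ s y
    have H := ((((h1.pow 2).const_mul k).add ((h2.pow 2).const_mul E)).add
      ((h3.pow 2).const_mul (μ * E))).add ((h4.pow 2).div_const ρ)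
    refine H.congr_deriv ?_
    simp only [hg]
    push_cast
    ring
  -- continuity of g on the plane
  have hgc : Continuous (fun p : ℝ × ℝ => g p.1 p.2) := by
    have c1 : Continuous (fun p : ℝ × ℝ => ξ₁ p.1 p.2) := hξ₁.continuous
    have c2 : Continuous (fun p : ℝ × ℝ => ξ₂ p.1 p.2) := hξ₂.continuous
    have c3 : Continuous (fun p : ℝ × ℝ => ξ₃ p.1 p.2) := hξ₃.continuous
    have c4 : Continuous (fun p : ℝ × ℝ => dx ξ₂ p.1 p.2) := hdxξ₂.continuous
    have c5 : Continuous (fun p : ℝ × ℝ => dt ξ₁ p.1 p.2) := (pd_contDiff_dt hξ₁).continuous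
    have c6 : Continuous (fun p : ℝ × ℝ => dt ξ₂ p.1 p.2) := hdtξ₂.continuous
    have c7 : Continuous (fun p : ℝ × ℝ => dt (dx ξ₂) p.1 p.2) := hdtdxξ₂.continuous
    have c8 : Continuous (fun p : ℝ × ℝ => dt ξ₃ p.1 p.2) := (pd_contDiff_dt hξ₃).continuous
    simp only [hg]
    exact (((continuous_const.mul ((continuous_const.mul c1).mul c5)).add
      (continuous_const.mul ((continuous_const.mul c2).mul c6))).add
      (continuous_const.mul ((continuous_const.mul c4).mul c7))).add
      (((continuous_const.mul c3).mul c8).div_const ρ)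
  -- bound on a compact neighbourhood
  obtain ⟨C, hC⟩ := ((isCompact_Icc (a := t - 1) (b := t + 1)).prod
    (isCompact_Icc (a := a) (b := b))).exists_bound_of_continuousOn hgc.continuousOn
  have hIsub : Set.uIoc a b ⊆ Set.Icc a b := by
    rw [Set.uIoc_of_le hab.le]; exact Set.Ioc_subset_Icc_self
  -- differentiate under the integral sign
  have key := intervalIntegral.hasDerivAt_integral_of_dominated_loc_of_deriv_le
    (F := fun s y => k * (ξ₁ s y) ^ 2 + E * (ξ₂ s y) ^ 2 + μ * E * (dx ξ₂ s y) ^ 2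
        + (ξ₃ s y) ^ 2 / ρ)
    (F' := g) (x₀ := t) (a := a) (b := b) (μ := MeasureTheory.volume)
    (bound := fun _ => C) (s := Metric.ball t 1) (Metric.ball_mem_nhds t one_pos)
    (Filter.Eventually.of_forall fun s => by
      have : Continuous (fun y => k * (ξ₁ s y) ^ 2 + E * (ξ₂ s y) ^ 2
          + μ * E * (dx ξ₂ s y) ^ 2 + (ξ₃ s y) ^ 2 / ρ) := by
        exact (((continuous_const.mul ((pd_cont_x hξ₁ s).pow 2)).add
          (continuous_const.mul ((pd_cont_x hξ₂ s).pow 2))).add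
          (continuous_const.mul ((pd_cont_x hdxξ₂ s).pow 2))).add
          (((pd_cont_x hξ₃ s).pow 2).div_const ρ)
      exact this.aestronglyMeasurable)
    (by
      apply Continuous.intervalIntegrable
      exact (((continuous_const.mul ((pd_cont_x hξ₁ t).pow 2)).add
        (continuous_const.mul ((pd_cont_x hξ₂ t).pow 2))).add
        (continuous_const.mul ((pd_cont_x hdxξ₂ t).pow 2))).add
        (((pd_cont_x hξ₃ t).pow 2).div_const ρ))
    ((hgc.comp (continuous_const.prodMk continuous_id)).aestronglyMeasurable)
    (Filter.Eventually.of_forall fun y hy s hs => by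
      apply hC (s, y)
      refine Set.mk_mem_prod ?_ (hIsub hy)
      have := Metric.mem_ball.mp hs
      rw [Real.dist_eq] at this
      constructor <;> [linarith [abs_lt.mp this |>.1]; linarith [abs_lt.mp this |>.2]])
    (intervalIntegrable_const)
    (Filter.Eventually.of_forall fun y _ s _ => hG s y)
  obtain ⟨-, hderiv⟩ := key
  -- the boundary function for integration by parts
  set W : ℝ → ℝ := fun y =>
    E * ξ₂ t y * v t y + μ * E * ξ₂ t y * dx (dt ξ₂) t y + v t y * eσ t y
      + μ / τ * (eσ t y * dx eσ t y) with hW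
  set DW : ℝ → ℝ := fun y =>
    E * (dx ξ₂ t y * v t y + ξ₂ t y * dx v t y)
      + μ * E * (dx ξ₂ t y * dx (dt ξ₂) t y + ξ₂ t y * dx (dx (dt ξ₂)) t y)
      + (dx v t y * eσ t y + v t y * dx eσ t y)
      + μ / τ * (dx eσ t y * dx eσ t y + eσ t y * dx (dx eσ) t y) with hDW
  have hWderiv : ∀ y : ℝ, HasDerivAt W (DW y) y := by
    intro y
    have h2 := pd_hasDerivAt_dx hξ₂ t y
    have hv' := pd_hasDerivAt_dx hvC t y
    have hdt2 := pd_hasDerivAt_dx hdxdtξ₂ t y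
    have he := pd_hasDerivAt_dx heσ t y
    have hde := pd_hasDerivAt_dx hdxe t y
    have H := ((((h2.const_mul E).mul hv').add
      ((h2.const_mul (μ * E)).mul hdt2)).add (hv'.mul he)).add
      ((he.mul hde).const_mul (μ / τ))
    refine H.congr_deriv ?_
    try simp only [hDW]
    ring
  -- continuity in y of all ingredients, at time t
  have cξ₂ := pd_cont_x hξ₂ t
  have cdxξ₂ := pd_cont_x hdxξ₂ t
  have cv := pd_cont_x hvC t
  have cdxv := pd_cont_x hdxv t
  have cdxdt := pd_cont_x hdxdtξ₂ t
  have cdxdxdt := pd_cont_x hdxdxdtξ₂ t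
  have ce := pd_cont_x heσ t
  have cdxe := pd_cont_x hdxe t
  have cdxdxe := pd_cont_x hdxdxe t
  have cDW : Continuous DW := by
    simp only [hDW]
    exact (((continuous_const.mul ((cdxξ₂.mul cv).add (cξ₂.mul cdxv))).add
      (continuous_const.mul ((cdxξ₂.mul cdxdt).add (cξ₂.mul cdxdxdt)))).add
      ((cdxv.mul ce).add (cv.mul cdxe))).add
      (continuous_const.mul ((cdxe.mul cdxe).add (ce.mul cdxdxe)))
  have hDWint : IntervalIntegrable DW MeasureTheory.volume a b := cDW.intervalIntegrable a b
  have hFTC : ∫ y in a..b, DW y = W b - W a :=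
    intervalIntegral.integral_eq_sub_of_hasDerivAt (fun y _ => hWderiv y) hDWint
  -- boundary values vanish
  obtain ⟨hva, hvb, hea, heb, -, -, hdta, hdtb⟩ := hbc t
  have hWa : W a = 0 := by
    have hs := pd_schwarz hξ₂ t a
    simp only [hW, hva, hea, ← hs, hdta]; ring
  have hWb : W b = 0 := by
    have hs := pd_schwarz hξ₂ t b
    simp only [hW, hvb, heb, ← hs, hdtb]; ring
  -- the dissipation integrand
  set Q : ℝ → ℝ := fun y =>
    d * (v t y) ^ 2 + 1 / τ * ((eσ t y) ^ 2 + μ * (dx eσ t y) ^ 2) with hQ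
  have cQ : Continuous Q := by
    simp only [hQ]
    exact (continuous_const.mul (cv.pow 2)).add
      (continuous_const.mul ((ce.pow 2).add (continuous_const.mul (cdxe.pow 2))))
  have hQint : IntervalIntegrable Q MeasureTheory.volume a b := cQ.intervalIntegrable a b
  -- pointwise identity on [a,b]
  have hpt : ∀ y ∈ Set.Icc a b, (1 / 2 : ℝ) * g t y = -Q y + DW y := by
    intro y hy
    have e1 := hdyn₁ t y hy
    have e2 := hdyn₂ t y hy
    have e3 := hdyn₃ t y hy
    have e4 := hres t y hy
    have e5 := pd_schwarz hξ₂ t y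
    have e6 : v t y = ξ₃ t y / ρ := by rw [hv]
    have hdxσ : dx σ t y = E * dx ξ₂ t y := by
      rw [hσ]; exact ((pd_hasDerivAt_dx hξ₂ t y).const_mul E).deriv
    have hFy : F t y = k * ξ₁ t y := by rw [hF]
    rw [hdxσ, hFy] at e3
    have e4' : dx v t y = (eσ t y - μ * dx (dx eσ) t y) / τ := by
      rw [e4]; field_simp
    simp only [hg, hQ, hDW]
    linear_combination (k * ξ₁ t y) * e1 + (ξ₃ t y / ρ) * e3
      - (-(k * ξ₁ t y) + E * dx ξ₂ t y - d * v t y + dx eσ t y) * e6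
      + (μ * E * dx ξ₂ t y) * e5 + (E * ξ₂ t y) * e2 - (eσ t y) * e4'
  -- integral identity
  have hInt : (1 / 2 : ℝ) * (∫ y in a..b, g t y) = -∫ y in a..b, Q y := by
    have h1 : (∫ y in a..b, (1 / 2 : ℝ) * g t y) = ∫ y in a..b, (-Q y + DW y) := by
      apply intervalIntegral.integral_congr
      intro y hy
      rw [Set.uIcc_of_le hab.le] at hy
      exact hpt y hy
    have h2 : (∫ y in a..b, (-Q y + DW y))
        = (∫ y in a..b, -Q y) + ∫ y in a..b, DW y :=
      intervalIntegral.integral_add hQint.neg hDWint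
    rw [← intervalIntegral.integral_const_mul, h1, h2, hFTC, hWa, hWb,
      intervalIntegral.integral_neg]
    ring
  refine ⟨?_, ?_⟩
  · have := hderiv.const_mul (1 / 2 : ℝ)
    rw [hInt] at this
    convert this using 1
  · have h0 : 0 ≤ ∫ y in a..b, Q y := by
      apply intervalIntegral.integral_nonneg hab.le
      intro u _
      simp only [hQ]
      positivity
    simpa using neg_nonpos.mpr h0
end

section
/- For smooth functions e₁, e₂, e₃, e₄, e₅ : ℝ → ℝ, define 𝒢†(e₁,e₂,e₃,e₄,e₅) := (−∂ₓe₁ − ∂ₓe₅, e₂, −∂ₓe₃ − e₅, e₄), 𝒥ᴵ(x₁,x₂,x₃,x₄) := (x₂, −x₁, x₄, −x₃), and 𝒢(z₁,z₂,z₃,z₄) := (∂ₓz₁, z₂, ∂ₓz₃, z₄, ∂ₓz₁ − z₃). Then for all smooth (e₁,…,e₅), 𝒢(𝒥ᴵ(𝒢†(e₁,…,e₅))) = (∂ₓe₂, ∂ₓe₁ + ∂ₓe₅, ∂ₓe₄, ∂ₓe₃ + e₅, ∂ₓe₂ − e₄), which is exactly 𝒥ᴱ(e₁,…,e₅) for the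 explicit Timoshenko structure operator 𝒥ᴱ. In other words, 𝒢 𝒥ᴵ 𝒢† = 𝒥ᴱ as differential operators acting on smooth 5-tuples. -/
/-- Formal adjoint `𝒢†` of the implicit-to-explicit Timoshenko state transformation,
mapping explicit efforts `(e₁,…,e₅)` to implicit efforts. -/
noncomputable def Gdag :
    ((ℝ → ℝ) × (ℝ → ℝ) × (ℝ → ℝ) × (ℝ → ℝ) × (ℝ → ℝ)) →
      ((ℝ → ℝ) × (ℝ → ℝ) × (ℝ → ℝ) × (ℝ → ℝ))
  | (e₁, e₂, e₃, e₄, e₅) =>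
    (fun x => -deriv e₁ x - deriv e₅ x, e₂, fun x => -deriv e₃ x - e₅ x, e₄)

/-- Canonical implicit structure operator `𝒥ᴵ`. -/
def JI : ((ℝ → ℝ) × (ℝ → ℝ) × (ℝ → ℝ) × (ℝ → ℝ)) →
    ((ℝ → ℝ) × (ℝ → ℝ) × (ℝ → ℝ) × (ℝ → ℝ))
  | (x₁, x₂, x₃, x₄) => (x₂, fun x => -x₁ x, x₄, fun x => -x₃ x)

/-- Implicit-to-explicit Timoshenko state transformation `𝒢`. -/
noncomputable def Gmap :
    ((ℝ → ℝ) × (ℝ → ℝ) × (ℝ → ℝ) × (ℝ → ℝ)) →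
      ((ℝ → ℝ) × (ℝ → ℝ) × (ℝ → ℝ) × (ℝ → ℝ) × (ℝ → ℝ))
  | (z₁, z₂, z₃, z₄) => (deriv z₁, z₂, deriv z₃, z₄, fun x => deriv z₁ x - z₃ x)

/-- `𝒢 𝒥ᴵ 𝒢† = 𝒥ᴱ`: on smooth 5-tuples, the composite `𝒢 ∘ 𝒥ᴵ ∘ 𝒢†` equals the
explicit Timoshenko structure operator
`(e₁,…,e₅) ↦ (∂ₓe₂, ∂ₓe₁ + ∂ₓe₅, ∂ₓe₄, ∂ₓe₃ + e₅, ∂ₓe₂ − e₄)`. -/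
theorem stmt14 (e₁ e₂ e₃ e₄ e₅ : ℝ → ℝ)
    (h₁ : ContDiff ℝ (⊤ : ℕ∞) e₁) (h₂ : ContDiff ℝ (⊤ : ℕ∞) e₂) (h₃ : ContDiff ℝ (⊤ : ℕ∞) e₃)
    (h₄ : ContDiff ℝ (⊤ : ℕ∞) e₄) (h₅ : ContDiff ℝ (⊤ : ℕ∞) e₅) :
    Gmap (JI (Gdag (e₁, e₂, e₃, e₄, e₅)))
      = (deriv e₂, fun x => deriv e₁ x + deriv e₅ x, deriv e₄,
          fun x => deriv e₃ x + e₅ x, fun x => deriv e₂ x - e₄ x) := by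
  simp only [Gmap, JI, Gdag]
  refine Prod.ext rfl (Prod.ext ?_ (Prod.ext rfl (Prod.ext ?_ rfl))) <;> funext x <;> ring
end

section
/- For smooth functions σ_w, σ_φ, v : ℝ → ℝ, define 𝒢ᵣ†(σ_w, σ_φ, v) := (−∂ₓσ_w + ∂ₓ²σ_φ, v), 𝒥ᵣᴵ(x,y) := (y, −x), and 𝒢ᵣ(w, p) := (∂ₓw, ∂ₓ²w, p). Then 𝒢ᵣ( 𝒥ᵣᴵ( 𝒢ᵣ†(σ_w, σ_φ, v) ) ) = ( ∂ₓv, ∂ₓ²v, ∂ₓσ_w − ∂ₓ²σ_φ ), which equals 𝒥ᵣᴱ(σ_w, σ_φ, v) for the reduced Euler–Bernoulli structure operator 𝒥ᵣᴱ = [[0,0,∂ₓ],[0,0,∂ₓ²],[∂ₓ,−∂ₓ²,0]]. In other words, 𝒢ᵣ 𝒥ᵣᴵ 𝒢ᵣ† = 𝒥ᵣᴱ as differential operators on smooth triples. -/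
/-- Formal adjoint `𝒢ᵣ†` of the reduced Euler–Bernoulli state transformation,
mapping explicit efforts `(σ_w, σ_φ, v)` to implicit efforts. -/
noncomputable def Grdag :
    ((ℝ → ℝ) × (ℝ → ℝ) × (ℝ → ℝ)) → ((ℝ → ℝ) × (ℝ → ℝ))
  | (σw, σφ, v) => (fun x => -deriv σw x + deriv (deriv σφ) x, v)

/-- Canonical reduced implicit structure operator `𝒥ᵣᴵ(x,y) = (y,−x)`. -/
def JIr : ((ℝ → ℝ) × (ℝ → ℝ)) → ((ℝ → ℝ) × (ℝ → ℝ))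
  | (x, y) => (y, fun t => -x t)

/-- Reduced implicit-to-explicit state transformation `𝒢ᵣ(w,p) = (∂ₓw, ∂ₓ²w, p)`. -/
noncomputable def Gr : ((ℝ → ℝ) × (ℝ → ℝ)) → ((ℝ → ℝ) × (ℝ → ℝ) × (ℝ → ℝ))
  | (w, p) => (deriv w, deriv (deriv w), p)

/-- `𝒢ᵣ 𝒥ᵣᴵ 𝒢ᵣ† = 𝒥ᵣᴱ`: on smooth triples the composite equals the reduced explicit
Euler–Bernoulli structure operator `(σ_w,σ_φ,v) ↦ (∂ₓv, ∂ₓ²v, ∂ₓσ_w − ∂ₓ²σ_φ)`. -/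
theorem stmt18 (σw σφ v : ℝ → ℝ)
    (hσw : ContDiff ℝ (⊤ : ℕ∞) σw) (hσφ : ContDiff ℝ (⊤ : ℕ∞) σφ) (hv : ContDiff ℝ (⊤ : ℕ∞) v) :
    Gr (JIr (Grdag (σw, σφ, v)))
      = (deriv v, deriv (deriv v), fun x => deriv σw x - deriv (deriv σφ) x) := by
  simp only [Gr, JIr, Grdag, Prod.mk.injEq]
  refine ⟨trivial, trivial, ?_⟩
  funext x
  ring
end
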